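/- For V′, V″ ∈ C^{q−1} with dV′ = dV″, and for every ψ in the code space, M^b_{V′} ψ = M^b_{V″} ψ, where (M^b_{V′} ψ)(a,b,c) := (−1)^{∫ a ∪ V′ ∪ c} ψ(a, b + dV′, c). Hence on the code space the magnetic operator attached to a boundary Σ = dV′ does not depend on the particular choice of the bounding cochain V′ (the well-definedness of magnetic operators asserted in Section 3.3.3). -/

import Mathlib

noncomputable section

open scoped BigOperators

/-- Transport a cochain along an equality of degrees. -/
def cellCast {cells : ℕ → Type} {i j : ℕ} (h : i = j) (x : cells i → ZMod 2) :
    cells j → ZMod 2 :=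
  fun σ => x (cast (congrArg cells h.symm) σ)

/-- A *cochain system* of dimension `N` over `𝔽₂ = ZMod 2`: finite sets of cells in
each degree, `𝔽₂`-linear coboundary maps `d` with `d ∘ d = 0`, `𝔽₂`-bilinear associative
cup products satisfying the Leibniz rule, and an `𝔽₂`-linear integral on top-degree
cochains satisfying the Stokes identity.  (These are the structures carried by the `𝔽₂`
cellular cochains of a closed Poincaré CW complex.) -/
structure CochainSystem (N : ℕ) where
  cells : ℕ → Type
  fintypeCells : ∀ i, Fintype (cells i)
  decEqCells : ∀ i, DecidableEq (cells i)
  d : ∀ i, (cells i → ZMod 2) →ₗ[ZMod 2] (cells (i + 1) → ZMod 2)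
  cup : ∀ i j, (cells i → ZMod 2) →ₗ[ZMod 2]
    ((cells j → ZMod 2) →ₗ[ZMod 2] (cells (i + j) → ZMod 2))
  integ : (cells N → ZMod 2) →ₗ[ZMod 2] ZMod 2
  d_comp_d : ∀ (i : ℕ) (x : cells i → ZMod 2), d (i + 1) (d i x) = 0
  cup_assoc : ∀ {i j k : ℕ} (u : cells i → ZMod 2) (v : cells j → ZMod 2)
    (w : cells k → ZMod 2),
    cup (i + j) k (cup i j u v) w
      = cellCast (Nat.add_assoc i j k).symm (cup i (j + k) u (cup j k v w))
  leibniz : ∀ {i j : ℕ} (u : cells i → ZMod 2) (v : cells j → ZMod 2),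
    d (i + j) (cup i j u v)
      = cellCast (by omega : i + 1 + j = i + j + 1) (cup (i + 1) j (d i u) v)
        + cellCast (by omega : i + (j + 1) = i + j + 1) (cup i (j + 1) u (d j v))
  stokes : ∀ (k : ℕ) (hk : k + 1 = N) (w : cells k → ZMod 2),
    integ (cellCast hk (d k w)) = 0

attribute [instance] CochainSystem.fintypeCells CochainSystem.decEqCells

namespace CochainSystem

variable {N : ℕ}

/-- The degree-`i` cochain space `Cⁱ`. -/
abbrev C (S : CochainSystem N) (i : ℕ) : Type := S.cells i → ZMod 2

/-- The indicator cochain `σ̃` of a cell `σ`. -/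
def indicator (S : CochainSystem N) {i : ℕ} (σ : S.cells i) : S.C i :=
  fun τ => if τ = σ then 1 else 0

/-- `∫ (u ∪ v) ∪ w` when the degrees add up to `N`. -/
def integ3 (S : CochainSystem N) {i j k : ℕ} (h : i + j + k = N)
    (u : S.C i) (v : S.C j) (w : S.C k) : ZMod 2 :=
  S.integ (cellCast h (S.cup (i + j) k (S.cup i j u v) w))

end CochainSystem

/-- The sign `(-1)ᵗ ∈ ℂ` of `t ∈ 𝔽₂`. -/
def sgn (t : ZMod 2) : ℂ := (-1 : ℂ) ^ t.val

open CochainSystem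

section Twisted

variable {N p q s : ℕ}

/-- A configuration of `ℤ₂`-gauge fields for the three colours `r`, `b`, `g`. -/
abbrev Config (S : CochainSystem N) (p q s : ℕ) : Type :=
  S.C (p + 1) × S.C (q + 1) × S.C (s + 1)

/-- The three-colour qubit space `V = ((Cᵖ × C^q × C^s) → ℂ)` of the twisted code. -/
abbrev QSpace (S : CochainSystem N) (p q s : ℕ) : Type := Config S p q s → ℂ

/-- The dressed Gauss operator `Ã^r_σ` of the twisted code:
`(Ã^r_σ ψ)(a,b,c) = (−1)^{∫ σ̃ ∪ b ∪ c} ψ(a + dσ̃, b, c)`. -/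
def gaussR (S : CochainSystem N) (h : p + 1 + (q + 1) + (s + 1) = N + 1)
    (σ : S.cells p) : QSpace S p q s → QSpace S p q s :=
  fun ψ x =>
    sgn (S.integ3 (show p + (q + 1) + (s + 1) = N by omega) (S.indicator σ) x.2.1 x.2.2)
      * ψ (x.1 + S.d p (S.indicator σ), x.2.1, x.2.2)

/-- The dressed Gauss operator `Ã^b_ξ`:
`(Ã^b_ξ ψ)(a,b,c) = (−1)^{∫ a ∪ ξ̃ ∪ c} ψ(a, b + dξ̃, c)`. -/
def gaussB (S : CochainSystem N) (h : p + 1 + (q + 1) + (s + 1) = N + 1)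
    (ξ : S.cells q) : QSpace S p q s → QSpace S p q s :=
  fun ψ x =>
    sgn (S.integ3 (show p + 1 + q + (s + 1) = N by omega) x.1 (S.indicator ξ) x.2.2)
      * ψ (x.1, x.2.1 + S.d q (S.indicator ξ), x.2.2)

/-- The dressed Gauss operator `Ã^g_ζ`:
`(Ã^g_ζ ψ)(a,b,c) = (−1)^{∫ a ∪ b ∪ ζ̃} ψ(a, b, c + dζ̃)`. -/
def gaussG (S : CochainSystem N) (h : p + 1 + (q + 1) + (s + 1) = N + 1)
    (ζ : S.cells s) : QSpace S p q s → QSpace S p q s :=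
  fun ψ x =>
    sgn (S.integ3 (show p + 1 + (q + 1) + s = N by omega) x.1 x.2.1 (S.indicator ζ))
      * ψ (x.1, x.2.1, x.2.2 + S.d s (S.indicator ζ))

/-- The diagonal flux operator `B^r_τ`, multiplying `ψ(a,b,c)` by `(−1)^{(da)(τ)}`. -/
def fluxR (S : CochainSystem N) (p q s : ℕ) (τ : S.cells (p + 2)) :
    QSpace S p q s → QSpace S p q s :=
  fun ψ x => sgn (S.d (p + 1) x.1 τ) * ψ x

/-- The diagonal flux operator `B^b_τ′`, multiplying `ψ(a,b,c)` by `(−1)^{(db)(τ′)}`. -/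
def fluxB (S : CochainSystem N) (p q s : ℕ) (τ' : S.cells (q + 2)) :
    QSpace S p q s → QSpace S p q s :=
  fun ψ x => sgn (S.d (q + 1) x.2.1 τ') * ψ x

/-- The diagonal flux operator `B^g_τ″`, multiplying `ψ(a,b,c)` by `(−1)^{(dc)(τ″)}`. -/
def fluxG (S : CochainSystem N) (p q s : ℕ) (τ'' : S.cells (s + 2)) :
    QSpace S p q s → QSpace S p q s :=
  fun ψ x => sgn (S.d (s + 1) x.2.2 τ'') * ψ x

/-- The zero-flux subspace: vectors supported on flat (cocycle) configurations. -/
def ZeroFlux (S : CochainSystem N) (p q s : ℕ) : Set (QSpace S p q s) :=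
  {ψ | ∀ x : Config S p q s, ψ x ≠ 0 →
    S.d (p + 1) x.1 = 0 ∧ S.d (q + 1) x.2.1 = 0 ∧ S.d (s + 1) x.2.2 = 0}

/-- The code space of the twisted code: vectors fixed by every dressed Gauss operator
and every flux operator. -/
def CodeSpace (S : CochainSystem N) (h : p + 1 + (q + 1) + (s + 1) = N + 1) :
    Set (QSpace S p q s) :=
  {ψ | (∀ σ : S.cells p, gaussR S h σ ψ = ψ)
    ∧ (∀ ξ : S.cells q, gaussB S h ξ ψ = ψ)
    ∧ (∀ ζ : S.cells s, gaussG S h ζ ψ = ψ)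
    ∧ (∀ τ : S.cells (p + 2), fluxR S p q s τ ψ = ψ)
    ∧ (∀ τ' : S.cells (q + 2), fluxB S p q s τ' ψ = ψ)
    ∧ (∀ τ'' : S.cells (s + 2), fluxG S p q s τ'' ψ = ψ)}

/-- The set of stabilizer generators of the twisted code. -/
def Stabilizer (S : CochainSystem N) (h : p + 1 + (q + 1) + (s + 1) = N + 1) :
    Set (QSpace S p q s → QSpace S p q s) :=
  {O | (∃ σ, O = gaussR S h σ) ∨ (∃ ξ, O = gaussB S h ξ) ∨ (∃ ζ, O = gaussG S h ζ)
    ∨ (∃ τ, O = fluxR S p q s τ) ∨ (∃ τ', O = fluxB S p q s τ')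
    ∨ (∃ τ'', O = fluxG S p q s τ'')}

end Twisted

/-- The contractible (blue) magnetic operator `M^b_{V′}` attached to a bounding
cochain `V′ ∈ C^{q−1}`:
`(M^b_{V′} ψ)(a,b,c) = (−1)^{∫ a ∪ V′ ∪ c} ψ(a, b + dV′, c)`. -/
def magB {N p q s : ℕ} (S : CochainSystem N) (h : p + 1 + (q + 1) + (s + 1) = N + 1)
    (v : S.C q) : QSpace S p q s → QSpace S p q s :=
  fun ψ x =>
    sgn (S.integ3 (show p + 1 + q + (s + 1) = N by omega) x.1 v x.2.2)
      * ψ (x.1, x.2.1 + S.d q v, x.2.2)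

/-! On a state fixed by the blue Gauss operators every magnetic operator `M^b_V` acts as the
identity: `V ↦ M^b_V` turns sums of cochains into composites, because both the sign
`∫ a ∪ V ∪ c` and the shift `dV` are additive in `V`, and on the indicator cochain `ξ̃` it
is the Gauss operator `Ã^b_ξ`. Since every cochain is a sum of indicators, `M^b_{V′}` and
`M^b_{V″}` both act as the identity on the code space. -/

lemma sgn_add (t u : ZMod 2) : sgn (t + u) = sgn t * sgn u := by
  rw [sgn, sgn, sgn, ← pow_add, ZMod.val_add, ← Nat.mod_add_div (t.val + u.val) 2, pow_add,
    pow_mul]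
  simp

lemma cellCast_zero {cells : ℕ → Type} {i j : ℕ} (h : i = j) :
    cellCast h (0 : cells i → ZMod 2) = 0 := rfl

lemma cellCast_add {cells : ℕ → Type} {i j : ℕ} (h : i = j) (x y : cells i → ZMod 2) :
    cellCast h (x + y) = cellCast h x + cellCast h y := rfl

lemma integ3_add_mid {N : ℕ} (S : CochainSystem N) {i j k : ℕ} (h : i + j + k = N)
    (u : S.C i) (v w : S.C j) (c : S.C k) :
    S.integ3 h u (v + w) c = S.integ3 h u v c + S.integ3 h u w c := by
  simp only [integ3, map_add, LinearMap.add_apply, cellCast_add]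

lemma indicator_eq_single {N : ℕ} (S : CochainSystem N) {i : ℕ} (σ : S.cells i) :
    S.indicator σ = Pi.single σ 1 := by
  funext τ
  simp [indicator, Pi.single_apply]

section Magnetic

variable {N p q s : ℕ} (S : CochainSystem N) (h : p + 1 + (q + 1) + (s + 1) = N + 1)

lemma magB_zero (ψ : QSpace S p q s) : magB S h 0 ψ = ψ := by
  funext x
  simp [magB, integ3, sgn, cellCast_zero]

lemma magB_add (v w : S.C q) (ψ : QSpace S p q s) :
    magB S h (v + w) ψ = magB S h v (magB S h w ψ) := by
  funext x
  simp only [magB, integ3_add_mid, sgn_add, map_add, add_assoc]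
  ring

lemma magB_single (ξ : S.cells q) : magB S h (Pi.single ξ 1) = gaussB S h ξ := by
  rw [← indicator_eq_single]
  rfl

lemma magB_eq_self_of_gaussB_eq_self {ψ : QSpace S p q s}
    (hψ : ∀ ξ : S.cells q, gaussB S h ξ ψ = ψ) (v : S.C q) : magB S h v ψ = ψ := by
  induction v using Pi.single_induction with
  | zero => exact magB_zero S h ψ
  | add v w hv hw => rw [magB_add, hw, hv]
  | single ξ m =>
    obtain rfl | rfl : m = 0 ∨ m = 1 := by revert m; decide
    · rw [Pi.single_zero, magB_zero]
    · rw [magB_single, hψ ξ]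

end Magnetic

theorem magnetic_operator_well_defined_general
    {N p q s : ℕ} (S : CochainSystem N) (h : p + 1 + (q + 1) + (s + 1) = N + 1)
    (v v' : S.C q)
    (ψ : QSpace S p q s) (hψ : ψ ∈ CodeSpace S h) :
    magB S h v ψ = magB S h v' ψ := by
  rw [magB_eq_self_of_gaussB_eq_self S h hψ.2.1, magB_eq_self_of_gaussB_eq_self S h hψ.2.1]

/-- **Well-definedness of magnetic operators (Section 3.3.3).** For `V′, V″ ∈ C^{q−1}`
with `dV′ = dV″`, the magnetic operators `M^b_{V′}` and `M^b_{V″}` agree on every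
vector of the code space; hence on the code space the magnetic operator attached to a
boundary `Σ = dV′` does not depend on the particular choice of bounding cochain. -/
theorem magnetic_operator_well_defined
    {N p q s : ℕ} (S : CochainSystem N) (h : p + 1 + (q + 1) + (s + 1) = N + 1)
    (v v' : S.C q) (hv : S.d q v = S.d q v')
    (ψ : QSpace S p q s) (hψ : ψ ∈ CodeSpace S h) :
    magB S h v ψ = magB S h v' ψ :=
  magnetic_operator_well_defined_general S h v v' ψ hψ
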